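/- arXiv:1912.04193 — 2 statements merged into one kernel-verified Lean document; each statement's English description precedes it below -/
import Mathlib

section
/- Let a > 0 and t₀ > 0. Then lim_{x→∞} sup_{0 < t ≤ t₀} | x · K₁(a√(x²+t²)) / ( √(x²+t²) · K₁(ax) ) − 1 | = 0. Equivalently, for the Brownian motion with drift a subordinated by an independent 1/2-stable subordinator, p_t(x)/(t ν(x)) → 1 as x → ∞, uniformly in t ∈ (0, t₀], where p_t(x) = (a t e^{ax}/π) K₁(a√(x²+t²))/√(x²+t²) and ν(x) = (a e^{ax}/π) K₁(ax)/x for x > 0. -/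
/-!
The ratio is at most `1` since `K₁` is decreasing and `x ≤ √(x² + t²)`. For the lower bound, with
`δ = z' - z ≥ 0` and `c = cosh t`, the inequality `e^{-δ c} ≥ e^{-δ} (1 - δ (c - 1))` gives
`K₁(z') ≥ e^{-δ} (K₁(z) - δ G(z))`, where `G(z) = ∫ e^{-z cosh t} (cosh t - 1) cosh t dt`.
The factor `cosh t - 1` makes `G(z) ≤ e^{1-z} K₁(1) / (z - 1)`, while `K₁(z) ≥ e^{-z} / z`; hence
`G ≤ 2e K₁(1) K₁` on `[2, ∞)` and `K₁(z') / K₁(z) ≥ e^{-δ} (1 - 2e K₁(1) δ)` uniformly in `z ≥ 2`.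
For `t ≤ t₀` the shift `δ = a (√(x² + t²) - x)` is at most `a (√(x² + t₀²) - x) → 0`.
-/

open Real MeasureTheory Filter Topology

/-- The modified Bessel function of the second kind, `K_ν(z)`,
for `ν : ℝ` and `z > 0`. -/
noncomputable def besselK (ν z : ℝ) : ℝ :=
  ∫ t in Set.Ioi (0:ℝ), Real.exp (-z * Real.cosh t) * Real.cosh (ν * t)

open Set

lemma exp_le_two_mul_cosh (t : ℝ) : exp t ≤ 2 * cosh t := by
  rw [cosh_eq]
  linarith [exp_pos (-t)]

lemma tendsto_cosh_atTop : Tendsto cosh atTop atTop :=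
  tendsto_atTop_mono (fun t => by linarith [exp_le_two_mul_cosh t])
    (tendsto_exp_atTop.atTop_div_const two_pos)

lemma le_sqrt_sq_add_sq (x c : ℝ) : x ≤ √(x ^ 2 + c ^ 2) :=
  (le_abs_self x).trans (abs_le_sqrt (by nlinarith))

lemma exp_neg_mul_mul_sq_le {z c : ℝ} (hz : 0 < z) (hc : 0 < c) :
    exp (-z * c) * c ^ 2 ≤ 6 / (z ^ 3 * c) := by
  have hcube : (z * c) ^ 3 / 6 ≤ exp (z * c) := by
    simpa [Nat.factorial] using pow_div_factorial_le_exp (z * c) (by positivity) 3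
  rw [neg_mul, exp_neg, le_div_iff₀ (by positivity)]
  calc (exp (z * c))⁻¹ * c ^ 2 * (z ^ 3 * c) = (z * c) ^ 3 / exp (z * c) := by
        field_simp
    _ ≤ 6 := by rw [div_le_iff₀ (exp_pos _)]; linarith

lemma integrableOn_exp_neg_mul_cosh_mul {z : ℝ} (hz : 0 < z) {g : ℝ → ℝ} (hg : Continuous g)
    (hg_le : ∀ t, |g t| ≤ cosh t ^ 2) :
    IntegrableOn (fun t => exp (-z * cosh t) * g t) (Ioi 0) := by
  refine Integrable.mono' ((exp_neg_integrableOn_Ioi 0 one_pos).const_mul (12 / z ^ 3))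
    (by fun_prop) (Eventually.of_forall fun t => ?_)
  have hcosh := cosh_pos t
  calc ‖exp (-z * cosh t) * g t‖ ≤ exp (-z * cosh t) * cosh t ^ 2 := by
        rw [norm_mul, norm_of_nonneg (exp_pos _).le]
        exact mul_le_mul_of_nonneg_left (hg_le t) (exp_pos _).le
    _ ≤ 6 / (z ^ 3 * cosh t) := exp_neg_mul_mul_sq_le hz hcosh
    _ ≤ 12 / z ^ 3 * exp (-1 * t) := by
        rw [neg_one_mul, exp_neg, div_le_iff₀ (by positivity)]
        have := exp_le_two_mul_cosh t
        field_simp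
        nlinarith [pow_pos hz 3]

section BesselKOne

variable {z z' : ℝ}

lemma besselK_one_eq (z : ℝ) :
    besselK 1 z = ∫ t in Ioi 0, exp (-z * cosh t) * cosh t := by
  simp [besselK]

lemma integrableOn_besselK_one (hz : 0 < z) :
    IntegrableOn (fun t => exp (-z * cosh t) * cosh t) (Ioi 0) :=
  integrableOn_exp_neg_mul_cosh_mul hz continuous_cosh fun t => by
    rw [abs_of_pos (cosh_pos t)]
    exact le_self_pow₀ (one_le_cosh t) two_ne_zero

lemma integrableOn_exp_neg_mul_cosh_mul_sinh (hz : 0 < z) :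
    IntegrableOn (fun t => exp (-z * cosh t) * sinh t) (Ioi 0) :=
  integrableOn_exp_neg_mul_cosh_mul hz continuous_sinh fun t => by
    rw [abs_sinh, ← cosh_abs t]
    exact (sinh_lt_cosh _).le.trans (le_self_pow₀ (one_le_cosh _) two_ne_zero)

lemma integral_exp_neg_mul_cosh_mul_sinh (hz : 0 < z) :
    ∫ t in Ioi 0, exp (-z * cosh t) * sinh t = exp (-z) / z := by
  have hderiv (t : ℝ) : HasDerivAt (fun t => -exp (-z * cosh t) / z)
      (exp (-z * cosh t) * sinh t) t := by
    refine (((hasDerivAt_cosh t).const_mul (-z)).exp.neg.div_const z).congr_deriv ?_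
    field_simp
  have hlim : Tendsto (fun t => -exp (-z * cosh t) / z) atTop (𝓝 0) := by
    simpa using ((tendsto_exp_atBot.comp
      (tendsto_cosh_atTop.const_mul_atTop_of_neg (neg_neg_of_pos hz))).neg.div_const z)
  rw [integral_Ioi_of_hasDerivAt_of_tendsto' (fun t _ => hderiv t)
    (integrableOn_exp_neg_mul_cosh_mul_sinh hz) hlim]
  simp [neg_div]

lemma exp_neg_div_le_besselK_one (hz : 0 < z) : exp (-z) / z ≤ besselK 1 z := by
  rw [besselK_one_eq, ← integral_exp_neg_mul_cosh_mul_sinh hz]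
  refine setIntegral_mono_on (integrableOn_exp_neg_mul_cosh_mul_sinh hz)
    (integrableOn_besselK_one hz) measurableSet_Ioi fun t _ => ?_
  exact mul_le_mul_of_nonneg_left (sinh_lt_cosh t).le (exp_pos _).le

lemma besselK_one_pos (hz : 0 < z) : 0 < besselK 1 z :=
  (div_pos (exp_pos _) hz).trans_le (exp_neg_div_le_besselK_one hz)

lemma besselK_one_antitoneOn : AntitoneOn (besselK 1) (Ioi 0) := by
  intro z hz z' _ hzz'
  rw [besselK_one_eq, besselK_one_eq]
  refine setIntegral_mono_on (integrableOn_besselK_one (lt_of_lt_of_le hz hzz'))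
    (integrableOn_besselK_one hz) measurableSet_Ioi fun t _ => ?_
  have := one_le_cosh t
  gcongr

noncomputable def besselKOneExcess (z : ℝ) : ℝ :=
  ∫ t in Ioi 0, exp (-z * cosh t) * ((cosh t - 1) * cosh t)

lemma integrableOn_besselKOneExcess (hz : 0 < z) :
    IntegrableOn (fun t => exp (-z * cosh t) * ((cosh t - 1) * cosh t)) (Ioi 0) :=
  integrableOn_exp_neg_mul_cosh_mul hz (by fun_prop) fun t => by
    have := one_le_cosh t
    rw [abs_of_nonneg (by nlinarith)]
    nlinarith

lemma exp_neg_sub_mul_sub_le_besselK_one (hz : 0 < z) (hzz' : z ≤ z') :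
    exp (-(z' - z)) * (besselK 1 z - (z' - z) * besselKOneExcess z) ≤ besselK 1 z' := by
  have hK := integrableOn_besselK_one hz
  have hG := integrableOn_besselKOneExcess hz
  rw [besselK_one_eq, besselK_one_eq, besselKOneExcess, ← integral_const_mul,
    ← integral_sub hK (hG.const_mul _), ← integral_const_mul]
  refine setIntegral_mono_on ((hK.sub (hG.const_mul _)).const_mul _)
    (integrableOn_besselK_one (hz.trans_le hzz')) measurableSet_Ioi fun t _ => ?_
  have hlin : 1 - (z' - z) * (cosh t - 1) ≤ exp (-((z' - z) * (cosh t - 1))) := by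
    linarith [add_one_le_exp (-((z' - z) * (cosh t - 1)))]
  calc exp (-(z' - z)) * (exp (-z * cosh t) * cosh t
          - (z' - z) * (exp (-z * cosh t) * ((cosh t - 1) * cosh t)))
      = exp (-(z' - z)) * exp (-z * cosh t) * cosh t * (1 - (z' - z) * (cosh t - 1)) := by ring
    _ ≤ exp (-(z' - z)) * exp (-z * cosh t) * cosh t * exp (-((z' - z) * (cosh t - 1))) := by
        gcongr
    _ = exp (-z' * cosh t) * cosh t := by
        rw [mul_right_comm, ← exp_add, ← exp_add]
        ring_nf

lemma besselKOneExcess_le (hz : 1 < z) :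
    besselKOneExcess z ≤ exp (-(z - 1)) / (z - 1) * besselK 1 1 := by
  have hz1 : 0 < z - 1 := sub_pos.2 hz
  rw [besselK_one_eq, ← integral_const_mul]
  refine setIntegral_mono_on (integrableOn_besselKOneExcess (by linarith))
    ((integrableOn_besselK_one one_pos).const_mul _) measurableSet_Ioi fun t _ => ?_
  set c := cosh t
  have hc : 1 ≤ c := one_le_cosh t
  have hw : (z - 1) * (c - 1) * exp (-((z - 1) * (c - 1))) ≤ 1 :=
    (mul_exp_neg_le_exp_neg_one _).trans (exp_le_one_iff.2 (by norm_num))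
  have hsplit : exp (-z * c) = exp (-(z - 1)) * exp (-1 * c) * exp (-((z - 1) * (c - 1))) := by
    rw [← exp_add, ← exp_add]
    ring_nf
  calc exp (-z * c) * ((c - 1) * c)
      = exp (-(z - 1)) / (z - 1) * (exp (-1 * c) * c)
          * ((z - 1) * (c - 1) * exp (-((z - 1) * (c - 1)))) := by
        rw [hsplit]
        field_simp
    _ ≤ exp (-(z - 1)) / (z - 1) * (exp (-1 * c) * c) := by
        apply mul_le_of_le_one_right (by positivity) hw

lemma besselKOneExcess_le_mul_besselK_one (hz : 2 ≤ z) :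
    besselKOneExcess z ≤ 2 * exp 1 * besselK 1 1 * besselK 1 z := by
  have hK1 := besselK_one_pos one_pos
  calc besselKOneExcess z ≤ exp (-(z - 1)) / (z - 1) * besselK 1 1 :=
        besselKOneExcess_le (by linarith)
    _ ≤ 2 * exp 1 * besselK 1 1 * (exp (-z) / z) := by
        rw [show exp (-(z - 1)) = exp 1 * exp (-z) by rw [← exp_add]; ring_nf]
        field_simp
        rw [div_le_iff₀ (by linarith)]
        linarith
    _ ≤ 2 * exp 1 * besselK 1 1 * besselK 1 z := by
        gcongr
        exact exp_neg_div_le_besselK_one (by linarith)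

lemma exp_neg_sub_mul_le_besselK_one_div (hz : 2 ≤ z) (hzz' : z ≤ z') :
    exp (-(z' - z)) * (1 - (z' - z) * (2 * exp 1 * besselK 1 1)) ≤ besselK 1 z' / besselK 1 z := by
  have hK := besselK_one_pos (by linarith : 0 < z)
  rw [le_div_iff₀ hK]
  calc exp (-(z' - z)) * (1 - (z' - z) * (2 * exp 1 * besselK 1 1)) * besselK 1 z
      = exp (-(z' - z)) * (besselK 1 z - (z' - z) * (2 * exp 1 * besselK 1 1 * besselK 1 z)) := by
        ring
    _ ≤ exp (-(z' - z)) * (besselK 1 z - (z' - z) * besselKOneExcess z) := by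
        gcongr
        exact besselKOneExcess_le_mul_besselK_one hz
    _ ≤ besselK 1 z' := exp_neg_sub_mul_sub_le_besselK_one (by linarith) hzz'

end BesselKOne

section Ratio

variable {a x s s₀ : ℝ}

lemma mul_besselK_one_div_le_one (ha : 0 < a) (hx : 0 < x) (hxs : x ≤ s) :
    x * besselK 1 (a * s) / (s * besselK 1 (a * x)) ≤ 1 := by
  have hs : 0 < s := hx.trans_le hxs
  have hKs : 0 < besselK 1 (a * s) := besselK_one_pos (by positivity)
  rw [div_le_one (mul_pos hs (besselK_one_pos (by positivity)))]
  exact mul_le_mul hxs (besselK_one_antitoneOn (by positivity : 0 < a * x)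
    (by positivity : 0 < a * s) (by gcongr)) hKs.le hs.le

lemma le_mul_besselK_one_div (hx : 0 < x) (hax : 2 ≤ a * x) (hxs : x ≤ s) (hss₀ : s ≤ s₀) :
    x / s₀ * (exp (-(a * s₀ - a * x)) * (1 - (a * s₀ - a * x) * (2 * exp 1 * besselK 1 1)))
      ≤ x * besselK 1 (a * s) / (s * besselK 1 (a * x)) := by
  have ha : 0 < a := pos_of_mul_pos_left (by linarith) hx.le
  have hs : 0 < s := hx.trans_le hxs
  have hs₀ : 0 < s₀ := hs.trans_le hss₀
  have has : a * s ≤ a * s₀ := by gcongr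
  calc x / s₀ * (exp (-(a * s₀ - a * x)) * (1 - (a * s₀ - a * x) * (2 * exp 1 * besselK 1 1)))
      ≤ x / s₀ * (besselK 1 (a * s₀) / besselK 1 (a * x)) := by
        refine mul_le_mul_of_nonneg_left ?_ (by positivity)
        exact exp_neg_sub_mul_le_besselK_one_div hax (by gcongr; linarith)
    _ ≤ x / s * (besselK 1 (a * s) / besselK 1 (a * x)) := by
        have := besselK_one_pos (by positivity : 0 < a * s₀)
        have := besselK_one_pos (by positivity : 0 < a * x)
        gcongr
        exact besselK_one_antitoneOn (by positivity : 0 < a * s) (by positivity : 0 < a * s₀) has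
    _ = x * besselK 1 (a * s) / (s * besselK 1 (a * x)) := by
        field_simp

end Ratio

lemma tendsto_sqrt_sq_add_sq_sub_self (c : ℝ) :
    Tendsto (fun x => √(x ^ 2 + c ^ 2) - x) atTop (𝓝 0) := by
  have hsum : Tendsto (fun x => √(x ^ 2 + c ^ 2) + x) atTop atTop :=
    tendsto_atTop_add_left_of_le _ 0 (fun _ => sqrt_nonneg _) tendsto_id
  refine ((tendsto_const_nhds (x := c ^ 2)).div_atTop hsum).congr' ?_
  filter_upwards [eventually_gt_atTop 0] with x hx
  have hsq : √(x ^ 2 + c ^ 2) ^ 2 = x ^ 2 + c ^ 2 := sq_sqrt (by positivity)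
  rw [div_eq_iff (by positivity)]
  linear_combination -hsq

lemma tendsto_div_sqrt_sq_add_sq (c : ℝ) :
    Tendsto (fun x => x / √(x ^ 2 + c ^ 2)) atTop (𝓝 1) := by
  have hsqrt : Tendsto (fun x => √(x ^ 2 + c ^ 2)) atTop atTop :=
    tendsto_atTop_mono (fun x => le_sqrt_sq_add_sq x c) tendsto_id
  have := tendsto_const_nhds (x := (1 : ℝ)).sub
    ((tendsto_sqrt_sq_add_sq_sub_self c).div_atTop hsqrt)
  rw [sub_zero] at this
  refine this.congr' ?_
  filter_upwards [eventually_gt_atTop 0] with x hx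
  have : 0 < √(x ^ 2 + c ^ 2) := sqrt_pos.2 (by positivity)
  field_simp
  ring

lemma tendstoUniformlyOn_const_of_mem_Icc {ι α : Type*} {l : Filter ι} {F : ι → α → ℝ}
    {φ : ι → ℝ} {c : ℝ} {S : Set α} (hφ : Tendsto φ l (𝓝 c))
    (hF : ∀ᶠ i in l, ∀ t ∈ S, F i t ∈ Icc (φ i) c) :
    TendstoUniformlyOn F (fun _ => c) l S := by
  rw [Metric.tendstoUniformlyOn_iff]
  intro ε hε
  filter_upwards [hF, hφ.eventually (eventually_gt_nhds (sub_lt_self c hε))]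
    with i hFi hφi t ht
  obtain ⟨hlow, hup⟩ := hFi t ht
  rw [Real.dist_eq, abs_of_nonneg (sub_nonneg.2 hup)]
  linarith

theorem subordinated_density_large_x_uniform_general (a t₀ : ℝ) (ha : 0 < a) :
    TendstoUniformlyOn
      (fun x t => x * besselK 1 (a * Real.sqrt (x ^ 2 + t ^ 2)) /
        (Real.sqrt (x ^ 2 + t ^ 2) * besselK 1 (a * x)))
      (fun _ => 1) Filter.atTop (Set.Ioc (0:ℝ) t₀) := by
  set C := 2 * exp 1 * besselK 1 1
  have hδ : Tendsto (fun x => a * √(x ^ 2 + t₀ ^ 2) - a * x) atTop (𝓝 0) := by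
    simpa [mul_sub] using (tendsto_sqrt_sq_add_sq_sub_self t₀).const_mul a
  refine tendstoUniformlyOn_const_of_mem_Icc (φ := fun x => x / √(x ^ 2 + t₀ ^ 2) *
    (exp (-(a * √(x ^ 2 + t₀ ^ 2) - a * x)) * (1 - (a * √(x ^ 2 + t₀ ^ 2) - a * x) * C))) ?_ ?_
  · simpa using (tendsto_div_sqrt_sq_add_sq t₀).mul
      (hδ.neg.rexp.mul ((tendsto_const_nhds (x := (1 : ℝ))).sub (hδ.mul_const C)))
  · filter_upwards [eventually_ge_atTop (2 / a)] with x hx t ⟨ht, htt₀⟩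
    have hax : 2 ≤ a * x := by rwa [div_le_iff₀' ha] at hx
    have hx0 : 0 < x := (div_pos two_pos ha).trans_le hx
    have hxs := le_sqrt_sq_add_sq x t
    exact ⟨le_mul_besselK_one_div hx0 hax hxs (sqrt_le_sqrt (by gcongr)),
      mul_besselK_one_div_le_one ha hx0 hxs⟩

/-- For the Brownian motion with drift `a > 0` subordinated by an independent 1/2-stable
subordinator, `p_t(x)/(t ν(x)) = x K₁(a√(x²+t²)) / (√(x²+t²) K₁(ax))` tends to `1` as
`x → ∞`, uniformly in `t ∈ (0, t₀]`. -/
theorem subordinated_density_large_x_uniform (a t₀ : ℝ) (ha : 0 < a) (ht₀ : 0 < t₀) :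
    TendstoUniformlyOn
      (fun x t => x * besselK 1 (a * Real.sqrt (x ^ 2 + t ^ 2)) /
        (Real.sqrt (x ^ 2 + t ^ 2) * besselK 1 (a * x)))
      (fun _ => 1) Filter.atTop (Set.Ioc (0:ℝ) t₀) :=
  subordinated_density_large_x_uniform_general a t₀ ha
end

section
/- Let a > 0 and α ∈ (0, 2). Then lim_{x→∞} x^{1+α/2} · ( a^{(1+α)/2} e^{ax} K_{(1+α)/2}(ax) / (π x^{(1+α)/2}) ) = a^{α/2}/√(2π). In particular the Lévy density ν(x) = a^{(1+α)/2} e^{ax} K_{(1+α)/2}(a|x|)/(π |x|^{(1+α)/2}) of the Brownian motion with drift a subordinated by an independent α/2-stable subordinator is regularly varying at +∞ with index −(1+α/2). -/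
open Real MeasureTheory Filter Topology

/-!
Laplace's method. The substitution `t = s / √z` gives
`√z e^z K_ν(z) = ∫₀^∞ exp (-z (cosh (s/√z) - 1)) cosh (ν s/√z) ds`. The exponent tends to `s²/2`
and is at least `s²/2`, while the second factor is at most `e^{|ν| s}` for `z ≥ 1`, so dominated
convergence gives `√z e^z K_ν(z) → ∫₀^∞ e^{-s²/2} ds = √(π/2)`. Taking `ν = (1+α)/2` and `z = ax`,
the powers of `x` and `a` in the Lévy density collapse to `a^{α/2}/√(2π)`.
-/

open Set

lemma one_add_sq_div_two_le_cosh (x : ℝ) : 1 + x ^ 2 / 2 ≤ cosh x := by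
  simpa [Finset.sum_range_succ] using
    sum_le_hasSum (Finset.range 2)
      (fun n _ => div_nonneg ((even_two_mul n).pow_nonneg x) (by positivity)) (hasSum_cosh x)

lemma cosh_sub_one_eq_two_mul_sinh_sq (x : ℝ) : cosh x - 1 = 2 * sinh (x / 2) ^ 2 := by
  conv_lhs => rw [← mul_div_cancel₀ x two_ne_zero, cosh_two_mul, cosh_sq]
  ring

lemma tendsto_sinh_div_self : Tendsto (fun x => sinh x / x) (𝓝[≠] 0) (𝓝 1) := by
  simpa [slope_fun_def_field] using (hasDerivAt_sinh 0).tendsto_slope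

lemma tendsto_mul_cosh_div_sqrt_sub_one (s : ℝ) :
    Tendsto (fun z => z * (cosh (s / √z) - 1)) atTop (𝓝 (s ^ 2 / 2)) := by
  rcases eq_or_ne s 0 with rfl | hs
  · simp
  have hu : Tendsto (fun z => s / (2 * √z)) atTop (𝓝[≠] 0) :=
    tendsto_nhdsWithin_of_tendsto_nhds_of_eventually_within _
      (tendsto_const_nhds.div_atTop (tendsto_sqrt_atTop.const_mul_atTop two_pos))
      ((eventually_gt_atTop 0).mono fun z hz => div_ne_zero hs (by positivity))
  have hsinh := ((tendsto_sinh_div_self.comp hu).pow 2).const_mul (s ^ 2 / 2)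
  rw [one_pow, mul_one] at hsinh
  refine hsinh.congr' ((eventually_gt_atTop 0).mono fun z hz => ?_)
  have hsz : 0 < √z := sqrt_pos.2 hz
  simp only [Function.comp_apply, cosh_sub_one_eq_two_mul_sinh_sq, div_div, mul_comm (√z)]
  field_simp
  rw [sq_sqrt hz.le]

lemma cosh_le_exp_abs (x : ℝ) : cosh x ≤ exp |x| := by
  rw [← cosh_abs, cosh_eq]
  linarith [exp_le_exp.2 (neg_le_self (abs_nonneg x))]

lemma integrable_exp_neg_sq_div_two_mul_exp (c : ℝ) :
    Integrable fun s => exp (-(s ^ 2 / 2)) * exp (c * s) := by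
  have h := ((integrable_exp_neg_mul_sq (b := 1 / 2) (by norm_num)).comp_sub_right c).const_mul
    (exp (c ^ 2 / 2))
  refine h.congr (ae_of_all _ fun s => ?_)
  simp only [← exp_add]
  ring_nf

lemma integral_exp_neg_sq_div_two_Ioi : ∫ s in Ioi 0, exp (-(s ^ 2 / 2)) = √(π / 2) := by
  have h := integral_gaussian_Ioi (1 / 2)
  rw [show π / (1 / 2) = 2 ^ 2 * (π / 2) by ring, sqrt_mul (by positivity),
    sqrt_sq zero_le_two] at h
  simpa [neg_div, div_eq_inv_mul] using h

noncomputable def besselKLaplaceIntegrand (ν z s : ℝ) : ℝ :=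
  exp (-(z * (cosh (s / √z) - 1))) * cosh (ν * (s / √z))

lemma sqrt_mul_exp_mul_besselK_eq_integral (ν : ℝ) {z : ℝ} (hz : 0 < z) :
    √z * (exp z * besselK ν z) = ∫ s in Ioi 0, besselKLaplaceIntegrand ν z s := by
  have hsub := integral_comp_mul_left_Ioi
    (fun t => exp (-(z * (cosh t - 1))) * cosh (ν * t)) 0 (inv_pos.2 (sqrt_pos.2 hz))
  simp only [mul_zero, inv_inv, smul_eq_mul, ← div_eq_inv_mul] at hsub
  unfold besselKLaplaceIntegrand
  rw [hsub, besselK, ← integral_const_mul]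
  congr 2 with t
  rw [← mul_assoc, ← exp_add]
  ring_nf

lemma besselKLaplaceIntegrand_le (ν : ℝ) {z s : ℝ} (hz : 1 ≤ z) (hs : 0 ≤ s) :
    besselKLaplaceIntegrand ν z s ≤ exp (-(s ^ 2 / 2)) * exp (|ν| * s) := by
  have hz0 : 0 < z := one_pos.trans_le hz
  have hsz : 1 ≤ √z := one_le_sqrt.2 hz
  have hgauss : s ^ 2 / 2 ≤ z * (cosh (s / √z) - 1) := by
    have := mul_le_mul_of_nonneg_left (one_add_sq_div_two_le_cosh (s / √z)) hz0.le
    rw [div_pow, sq_sqrt hz0.le] at this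
    field_simp at this ⊢
    linarith
  have hlin : |ν * (s / √z)| ≤ |ν| * s := by
    rw [abs_mul, abs_of_nonneg (by positivity : 0 ≤ s / √z)]
    exact mul_le_mul_of_nonneg_left (div_le_self hs hsz) (abs_nonneg ν)
  exact mul_le_mul (exp_le_exp.2 (neg_le_neg hgauss))
    ((cosh_le_exp_abs _).trans (exp_le_exp.2 hlin)) (cosh_pos _).le (exp_pos _).le

lemma tendsto_besselKLaplaceIntegrand (ν s : ℝ) :
    Tendsto (fun z => besselKLaplaceIntegrand ν z s) atTop (𝓝 (exp (-(s ^ 2 / 2)))) := by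
  have hcosh : Tendsto (fun z => cosh (ν * (s / √z))) atTop (𝓝 1) := by
    simpa [Function.comp_def] using (continuous_cosh.tendsto _).comp
      (((tendsto_const_nhds (x := s)).div_atTop tendsto_sqrt_atTop).const_mul ν)
  simpa [besselKLaplaceIntegrand] using
    ((continuous_exp.tendsto _).comp (tendsto_mul_cosh_div_sqrt_sub_one s).neg).mul hcosh

theorem tendsto_sqrt_mul_exp_mul_besselK (ν : ℝ) :
    Tendsto (fun z => √z * (exp z * besselK ν z)) atTop (𝓝 √(π / 2)) := by
  rw [← integral_exp_neg_sq_div_two_Ioi]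
  refine (tendsto_integral_filter_of_dominated_convergence _ ?meas ?bound
    (integrable_exp_neg_sq_div_two_mul_exp |ν|).integrableOn ?lim).congr'
    ((eventually_gt_atTop 0).mono fun z hz => (sqrt_mul_exp_mul_besselK_eq_integral ν hz).symm)
  case meas =>
    exact .of_forall fun z => by unfold besselKLaplaceIntegrand; fun_prop
  case bound =>
    filter_upwards [eventually_ge_atTop 1] with z hz
    filter_upwards [ae_restrict_mem measurableSet_Ioi] with s hs
    rw [norm_of_nonneg (by unfold besselKLaplaceIntegrand; positivity)]
    exact besselKLaplaceIntegrand_le ν hz (le_of_lt hs)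
  case lim =>
    exact ae_of_all _ fun s => tendsto_besselKLaplaceIntegrand ν s

theorem subordinated_levy_density_regular_variation_general (a α : ℝ) (ha : 0 < a) :
    Filter.Tendsto
      (fun x : ℝ => x ^ (1 + α / 2) *
        (a ^ ((1 + α) / 2) * Real.exp (a * x) * besselK ((1 + α) / 2) (a * x) /
          (π * x ^ ((1 + α) / 2))))
      Filter.atTop (𝓝 (a ^ (α / 2) / Real.sqrt (2 * π))) := by
  have hlim := ((tendsto_sqrt_mul_exp_mul_besselK ((1 + α) / 2)).comp
    (tendsto_id.const_mul_atTop ha)).const_mul (a ^ (α / 2) / π)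
  have hconst : a ^ (α / 2) / π * √(π / 2) = a ^ (α / 2) / √(2 * π) := by
    have hπ : √(π / 2) * √(2 * π) = π := by
      rw [← sqrt_mul (by positivity), show π / 2 * (2 * π) = π ^ 2 by ring, sqrt_sq pi_pos.le]
    rw [div_mul_eq_mul_div, div_eq_div_iff pi_ne_zero (by positivity), mul_assoc, hπ]
  rw [hconst] at hlim
  refine hlim.congr' ((eventually_gt_atTop 0).mono fun x hx => ?_)
  have hx_pow : x ^ (1 + α / 2) = x ^ ((1 + α) / 2) * √x := by
    rw [sqrt_eq_rpow, ← rpow_add hx]; ring_nf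
  have ha_pow : a ^ ((1 + α) / 2) = a ^ (α / 2) * √a := by
    rw [sqrt_eq_rpow, ← rpow_add ha]; ring_nf
  have : 0 < x ^ ((1 + α) / 2) := rpow_pos_of_pos hx _
  simp only [Function.comp_apply, id_eq, hx_pow, ha_pow, sqrt_mul ha.le]
  field_simp

/-- The Lévy density `ν(x) = a^{(1+α)/2} e^{ax} K_{(1+α)/2}(ax)/(π x^{(1+α)/2})` of the
Brownian motion with drift `a > 0` subordinated by an independent `α/2`-stable subordinator
satisfies `x^{1+α/2} ν(x) → a^{α/2}/√(2π)` as `x → ∞`; in particular it is regularly varying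
at `+∞` with index `-(1+α/2)`. -/
theorem subordinated_levy_density_regular_variation (a α : ℝ) (ha : 0 < a)
    (hα : α ∈ Set.Ioo (0:ℝ) 2) :
    Filter.Tendsto
      (fun x : ℝ => x ^ (1 + α / 2) *
        (a ^ ((1 + α) / 2) * Real.exp (a * x) * besselK ((1 + α) / 2) (a * x) /
          (π * x ^ ((1 + α) / 2))))
      Filter.atTop (𝓝 (a ^ (α / 2) / Real.sqrt (2 * π))) :=
  subordinated_levy_density_regular_variation_general a α ha
end
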